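/- arXiv:1704.00850 — 7 statements merged into one kernel-verified Lean document; each statement's English description precedes it below -/
import Mathlib

section
/- Let λ : ℕ → ℝ be a nonincreasing summable sequence with λ₀ = 1 and 0 ≤ λᵢ ≤ 1 for all i, and 0 < λ₁ < 1. For each integer k ≥ 2 set s_k = Σ_{i=0}^∞ λᵢ^k and l_k = (s_k − 1)/(s_{k−1} − 1). Then l_k converges to λ₁ as k → ∞ (monotonically from below). -/
open Filter Topology

/-!
Write `t k = s k - 1 = ∑_{i ≥ 1} λᵢ ^ k`, so that `l_k = t k / t (k - 1)`. Cauchy–Schwarz gives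
`t k ^ 2 ≤ t (k - 1) * t (k + 1)`, so these ratios are nondecreasing, and `λᵢ ≤ λ₁` for `i ≥ 1`
bounds them by `λ₁`. If their limit `L` were below `λ₁`, then `t k` would be `O(L ^ k)`,
contradicting `λ₁ ^ k ≤ t k`.
-/

theorem tsum_sq_le_tsum_mul_tsum {ι : Type*} {r f g : ι → ℝ} (hr : Summable r)
    (hf : Summable f) (hg : Summable g) (hf0 : ∀ i, 0 ≤ f i) (hg0 : ∀ i, 0 ≤ g i)
    (hrfg : ∀ i, r i ^ 2 ≤ f i * g i) :
    (∑' i, r i) ^ 2 ≤ (∑' i, f i) * ∑' i, g i := by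
  refine le_of_tendsto' (hr.hasSum.pow 2) fun s => ?_
  calc (∑ i ∈ s, r i) ^ 2 ≤ (∑ i ∈ s, f i) * ∑ i ∈ s, g i :=
        Finset.sum_sq_le_sum_mul_sum_of_sq_le_mul s (fun i _ => hf0 i) (fun i _ => hg0 i)
          (fun i _ => hrfg i)
    _ ≤ (∑' i, f i) * ∑' i, g i :=
        mul_le_mul (hf.sum_le_tsum s fun i _ => hf0 i) (hg.sum_le_tsum s fun i _ => hg0 i)
          (Finset.sum_nonneg fun i _ => hg0 i) (tsum_nonneg hf0)

section PowerSum

variable {ι : Type*} {a : ι → ℝ}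

noncomputable def powerSum (a : ι → ℝ) (k : ℕ) : ℝ := ∑' i, a i ^ k

theorem summable_pow_of_le_one (hsum : Summable a) (ha0 : ∀ i, 0 ≤ a i) (ha1 : ∀ i, a i ≤ 1)
    {k : ℕ} (hk : k ≠ 0) : Summable fun i => a i ^ k :=
  hsum.of_nonneg_of_le (fun i => pow_nonneg (ha0 i) k)
    fun i => pow_le_of_le_one (ha0 i) (ha1 i) hk

theorem pow_le_powerSum (ha0 : ∀ i, 0 ≤ a i) {k : ℕ} (hk : Summable fun i => a i ^ k) (j : ι) :
    a j ^ k ≤ powerSum a k :=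
  hk.le_tsum j fun i _ => pow_nonneg (ha0 i) k

theorem powerSum_succ_le_mul (ha0 : ∀ i, 0 ≤ a i) {c : ℝ} (hc : ∀ i, a i ≤ c) {k : ℕ}
    (hk : Summable fun i => a i ^ k) (hk1 : Summable fun i => a i ^ (k + 1)) :
    powerSum a (k + 1) ≤ c * powerSum a k :=
  calc powerSum a (k + 1) ≤ ∑' i, c * a i ^ k :=
        hk1.tsum_le_tsum (fun i => by
          rw [pow_succ']; exact mul_le_mul_of_nonneg_right (hc i) (pow_nonneg (ha0 i) k))
          (hk.mul_left c)
    _ = c * powerSum a k := tsum_mul_left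

theorem powerSum_succ_sq_le (ha0 : ∀ i, 0 ≤ a i) {k : ℕ} (hk : Summable fun i => a i ^ k)
    (hk1 : Summable fun i => a i ^ (k + 1)) (hk2 : Summable fun i => a i ^ (k + 2)) :
    powerSum a (k + 1) ^ 2 ≤ powerSum a k * powerSum a (k + 2) :=
  tsum_sq_le_tsum_mul_tsum hk1 hk hk2 (fun i => pow_nonneg (ha0 i) k)
    (fun i => pow_nonneg (ha0 i) (k + 2)) fun i => (by ring : (a i ^ (k + 1)) ^ 2 = a i ^ k * a i ^ (k + 2)).le

end PowerSum

section Ratio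

variable {t : ℕ → ℝ}

theorem monotone_succ_div_of_sq_le_mul (ht : ∀ k, 0 < t k)
    (hlogconvex : ∀ k, t (k + 1) ^ 2 ≤ t k * t (k + 2)) :
    Monotone fun k => t (k + 1) / t k :=
  monotone_nat_of_le_succ fun k => by
    rw [div_le_div_iff₀ (ht k) (ht (k + 1))]
    linarith [hlogconvex k]

theorem tendsto_succ_div_of_monotone {b c : ℝ} (ht : ∀ k, 0 < t k)
    (hmono : Monotone fun k => t (k + 1) / t k) (hle : ∀ k, t (k + 1) / t k ≤ c)
    (hb : 0 < b) (hlow : ∀ k, b * c ^ k ≤ t k) :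
    Tendsto (fun k => t (k + 1) / t k) atTop (𝓝 c) := by
  have hbdd : BddAbove (Set.range fun k => t (k + 1) / t k) := ⟨c, Set.forall_mem_range.2 hle⟩
  set L := ⨆ k, t (k + 1) / t k
  have hle_L : ∀ k, t (k + 1) / t k ≤ L := le_ciSup hbdd
  have hL_pos : 0 < L := (div_pos (ht 1) (ht 0)).trans_le (hle_L 0)
  have hgeom : ∀ k, t k ≤ t 0 * L ^ k := by
    intro k
    induction k with
    | zero => simp
    | succ k ih =>
      calc t (k + 1) ≤ L * t k := (div_le_iff₀ (ht k)).1 (hle_L k)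
        _ ≤ L * (t 0 * L ^ k) := by gcongr
        _ = t 0 * L ^ (k + 1) := by ring
  have hc_le : c ≤ L := by
    by_contra! hLc
    obtain ⟨k, hk⟩ := ((tendsto_pow_atTop_atTop_of_one_lt ((one_lt_div hL_pos).2 hLc)).eventually_gt_atTop
      (t 0 / b)).exists
    rw [div_pow, div_lt_div_iff₀ hb (pow_pos hL_pos k)] at hk
    linarith [hlow k, hgeom k]
  rw [← le_antisymm (ciSup_le hle) hc_le]
  exact tendsto_atTop_ciSup hmono hbdd

end Ratio

theorem lower_bounds_tendsto_second_eigenvalue_general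
    (l : ℕ → ℝ) (hmono : Antitone l) (hsum : Summable l)
    (h0 : l 0 = 1) (hbd : ∀ i, 0 ≤ l i ∧ l i ≤ 1)
    (hpos : 0 < l 1)
    (s : ℕ → ℝ) (hs : ∀ k : ℕ, 1 ≤ k → s k = ∑' i, (l i) ^ k)
    (lk : ℕ → ℝ) (hlk : ∀ k : ℕ, 2 ≤ k → lk k = (s k - 1) / (s (k - 1) - 1)) :
    Tendsto lk atTop (nhds (l 1)) ∧
    (∀ k : ℕ, 2 ≤ k → lk k ≤ lk (k + 1) ∧ lk k ≤ l 1) := by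
  have hpow : ∀ k, Summable fun i => l i ^ (k + 1) := fun k =>
    summable_pow_of_le_one hsum (fun i => (hbd i).1) (fun i => (hbd i).2) k.succ_ne_zero
  set a : ℕ → ℝ := fun i => l (i + 1)
  have ha0 : ∀ i, 0 ≤ a i := fun i => (hbd _).1
  have hapow : ∀ k, Summable fun i => a i ^ (k + 1) := fun k =>
    (summable_nat_add_iff 1).2 (hpow k)
  set t : ℕ → ℝ := fun k => powerSum a (k + 1)
  have hlow : ∀ k, l 1 * l 1 ^ k ≤ t k := fun k => by
    rw [← pow_succ']; exact pow_le_powerSum ha0 (hapow k) 0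
  have ht : ∀ k, 0 < t k := fun k => (mul_pos hpos (pow_pos hpos k)).trans_le (hlow k)
  have hs_tail : ∀ n, s (n + 1) - 1 = t n := fun n => by
    rw [hs _ n.succ_pos, (hpow n).tsum_eq_zero_add, h0, one_pow, add_sub_cancel_left]; rfl
  have hlk_eq : ∀ k, lk (k + 2) = t (k + 1) / t k := fun k => by
    rw [hlk _ (Nat.le_add_left 2 k), ← hs_tail, ← hs_tail]; rfl
  have hratio_mono : Monotone fun k => t (k + 1) / t k :=
    monotone_succ_div_of_sq_le_mul ht fun k =>
      powerSum_succ_sq_le ha0 (hapow k) (hapow (k + 1)) (hapow (k + 2))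
  have hratio_le : ∀ k, t (k + 1) / t k ≤ l 1 := fun k =>
    (div_le_iff₀ (ht k)).2 <|
      powerSum_succ_le_mul ha0 (fun i => hmono (Nat.le_add_left 1 i)) (hapow k) (hapow (k + 1))
  refine ⟨(tendsto_add_atTop_iff_nat 2).1 ?_, fun k hk => ?_⟩
  · simpa only [hlk_eq] using tendsto_succ_div_of_monotone ht hratio_mono hratio_le hpos hlow
  · obtain ⟨m, rfl⟩ := Nat.exists_eq_add_of_le' hk
    rw [hlk_eq, hlk_eq]
    exact ⟨hratio_mono m.le_succ, hratio_le m⟩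

/-- With `0 < l 1 < 1`, `s k = ∑' i, (l i) ^ k` and
`lk k = (s k - 1)/(s (k-1) - 1)` for `k ≥ 2`, the lower bounds `lk k`
converge to the second largest eigenvalue `l 1` as `k → ∞`, monotonically
from below. -/
theorem lower_bounds_tendsto_second_eigenvalue
    (l : ℕ → ℝ) (hmono : Antitone l) (hsum : Summable l)
    (h0 : l 0 = 1) (hbd : ∀ i, 0 ≤ l i ∧ l i ≤ 1)
    (hpos : 0 < l 1) (h1 : l 1 < 1)
    (s : ℕ → ℝ) (hs : ∀ k : ℕ, 1 ≤ k → s k = ∑' i, (l i) ^ k)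
    (lk : ℕ → ℝ) (hlk : ∀ k : ℕ, 2 ≤ k → lk k = (s k - 1) / (s (k - 1) - 1)) :
    Tendsto lk atTop (nhds (l 1)) ∧
    (∀ k : ℕ, 2 ≤ k → lk k ≤ lk (k + 1) ∧ lk k ≤ l 1) :=
  lower_bounds_tendsto_second_eigenvalue_general l hmono hsum h0 hbd hpos s hs lk hlk
end

section
/- Let λ : ℕ → ℝ be a nonincreasing summable sequence with λ₀ = 1 and 0 ≤ λᵢ ≤ 1 for all i, and 0 < λ₁ < 1. Suppose λ₁ has multiplicity m ≥ 1, i.e. λ₁ = λ₂ = ⋯ = λ_m > λ_{m+1}. For k ≥ 2 set s_k = Σ_{i=0}^∞ λᵢ^k and l_k = (s_k − 1)/(s_{k−1} − 1). Then there exists a constant C > 0 such that for all k ≥ 2, 0 ≤ λ₁ − l_k ≤ C · (λ_{m+1}/λ₁)^{k−1}. -/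
set_option maxHeartbeats 1000000


/-- Suppose `0 < l 1 < 1` and `l 1` has multiplicity `m ≥ 1`,
i.e. `l 1 = l 2 = ⋯ = l m > l (m+1)`.  With `s k = ∑' i, (l i) ^ k` and
`lk k = (s k - 1)/(s (k-1) - 1)` for `k ≥ 2`, there is a constant `C > 0`
such that `0 ≤ l 1 - lk k ≤ C * (l (m+1) / l 1) ^ (k - 1)` for all `k ≥ 2`. -/
theorem lower_bound_geometric_rate
    (l : ℕ → ℝ) (hmono : Antitone l) (hsum : Summable l)
    (h0 : l 0 = 1) (hbd : ∀ i, 0 ≤ l i ∧ l i ≤ 1)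
    (hpos : 0 < l 1) (h1 : l 1 < 1)
    (m : ℕ) (hm : 1 ≤ m)
    (hmult : ∀ i : ℕ, 1 ≤ i → i ≤ m → l i = l 1)
    (hgap : l (m + 1) < l 1)
    (s : ℕ → ℝ) (hs : ∀ k : ℕ, 1 ≤ k → s k = ∑' i, (l i) ^ k)
    (lk : ℕ → ℝ) (hlk : ∀ k : ℕ, 2 ≤ k → lk k = (s k - 1) / (s (k - 1) - 1)) :
    ∃ C : ℝ, 0 < C ∧ ∀ k : ℕ, 2 ≤ k →
      0 ≤ l 1 - lk k ∧ l 1 - lk k ≤ C * (l (m + 1) / l 1) ^ (k - 1) := by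
  have hm' : (0:ℝ) < m := by exact_mod_cast hm
  -- summability of powers
  have hσ : ∀ k : ℕ, 1 ≤ k → Summable (fun i => l i ^ k) := by
    intro k hk
    apply Summable.of_nonneg_of_le (fun i => pow_nonneg (hbd i).1 k) _ hsum
    intro i
    calc l i ^ k ≤ l i ^ 1 := pow_le_pow_of_le_one (hbd i).1 (hbd i).2 hk
    _ = l i := pow_one _
  have hσu : ∀ k : ℕ, 1 ≤ k → Summable (fun i => l (i+1) ^ k) := fun k hk =>
    (summable_nat_add_iff 1).mpr (hσ k hk)
  have hσr : ∀ k : ℕ, 1 ≤ k → Summable (fun i => l (i+m+1) ^ k) := fun k hk =>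
    (summable_nat_add_iff (m+1)).mpr (hσ k hk)
  set u : ℕ → ℝ := fun k => ∑' i, l (i+1) ^ k with hu_def
  set r : ℕ → ℝ := fun k => ∑' i, l (i+m+1) ^ k with hr_def
  have hr0 : ∀ k : ℕ, 0 ≤ r k := fun k =>
    tsum_nonneg (fun i => pow_nonneg (hbd _).1 k)
  have hu_eq : ∀ k : ℕ, 1 ≤ k → u k = m * l 1 ^ k + r k := by
    intro k hk
    have h1' := Summable.sum_add_tsum_nat_add m (hσu k hk)
    have hsum_m : (∑ i ∈ Finset.range m, l (i+1) ^ k) = m * l 1 ^ k := by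
      rw [Finset.sum_congr rfl (fun i hi => by
        rw [hmult (i+1) (by omega) (by have := Finset.mem_range.mp hi; omega)])]
      simp [Finset.sum_const, nsmul_eq_mul]
    rw [hsum_m] at h1'
    exact h1'.symm
  have hs_eq : ∀ k : ℕ, 1 ≤ k → s k - 1 = u k := by
    intro k hk
    rw [hs k hk, Summable.tsum_eq_zero_add (hσ k hk), h0, one_pow]
    ring
  have hupos : ∀ n : ℕ, 0 < u (n+1) := by
    intro n
    rw [hu_eq (n+1) (by omega)]
    have h2 : 0 < (m:ℝ) * l 1 ^ (n+1) := by positivity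
    linarith [hr0 (n+1)]
  have hr_step : ∀ n : ℕ, r (n+2) ≤ l 1 * r (n+1) := by
    intro n
    calc r (n+2) ≤ ∑' i, l 1 * l (i+m+1) ^ (n+1) := by
          refine Summable.tsum_le_tsum (fun i => ?_) (hσr (n+2) (by omega))
            ((hσr (n+1) (by omega)).mul_left (l 1))
          calc l (i+m+1) ^ (n+2) = l (i+m+1) ^ (n+1) * l (i+m+1) := pow_succ _ _
          _ ≤ l (i+m+1) ^ (n+1) * l 1 :=
              mul_le_mul_of_nonneg_left (hmono (by omega)) (pow_nonneg (hbd _).1 _)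
          _ = l 1 * l (i+m+1) ^ (n+1) := mul_comm _ _
    _ = l 1 * r (n+1) := tsum_mul_left
  have hr_geo : ∀ n : ℕ, r (n+1) ≤ l (m+1) ^ n * r 1 := by
    intro n
    calc r (n+1) ≤ ∑' i, l (m+1) ^ n * l (i+m+1) ^ 1 := by
          refine Summable.tsum_le_tsum (fun i => ?_) (hσr (n+1) (by omega))
            ((hσr 1 (by omega)).mul_left _)
          calc l (i+m+1) ^ (n+1) = l (i+m+1) ^ n * l (i+m+1) := pow_succ _ _
          _ ≤ l (m+1) ^ n * l (i+m+1) :=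
              mul_le_mul_of_nonneg_right
                (pow_le_pow_left₀ (hbd _).1 (hmono (by omega)) n) (hbd _).1
          _ = l (m+1) ^ n * l (i+m+1) ^ 1 := by rw [pow_one]
    _ = l (m+1) ^ n * r 1 := tsum_mul_left
  have hdiff : ∀ n : ℕ, l 1 - lk (n+2) = (l 1 * r (n+1) - r (n+2)) / u (n+1) := by
    intro n
    have hne : u (n+1) ≠ 0 := (hupos n).ne'
    have e1 : lk (n+2) = u (n+2) / u (n+1) := by
      rw [hlk (n+2) (by omega), show n + 2 - 1 = n + 1 from rfl,
        hs_eq (n+2) (by omega), hs_eq (n+1) (by omega)]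
    rw [e1, hu_eq (n+2) (by omega)]
    rw [hu_eq (n+1) (by omega)] at hne ⊢
    field_simp
    ring
  rcases eq_or_lt_of_le (hbd (m+1)).1 with hz | hp
  · -- l (m+1) = 0
    refine ⟨1, one_pos, ?_⟩
    intro k hk
    obtain ⟨n, rfl⟩ : ∃ n, k = n + 2 := ⟨k - 2, by omega⟩
    have hrz : ∀ j : ℕ, 1 ≤ j → r j = 0 := by
      intro j hj
      have hterm : ∀ i : ℕ, l (i+m+1) ^ j = 0 := by
        intro i
        have h1' : l (i+m+1) ≤ l (m+1) := hmono (by omega)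
        have h2' : l (i+m+1) = 0 := le_antisymm (by rw [← hz] at h1'; exact h1') (hbd _).1
        rw [h2']
        exact zero_pow (by omega)
      simp only [hr_def, hterm, tsum_zero]
    rw [hdiff n, hrz (n+1) (by omega), hrz (n+2) (by omega)]
    norm_num [← hz, zero_pow]
  · -- 0 < l (m+1)
    have hR : 0 ≤ r 1 := hr0 1
    refine ⟨l 1 * r 1 / ((m:ℝ) * l (m+1)) + 1, by positivity, ?_⟩
    intro k hk
    obtain ⟨n, rfl⟩ : ∃ n, k = n + 2 := ⟨k - 2, by omega⟩
    rw [show n + 2 - 1 = n + 1 from rfl]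
    constructor
    · rw [hdiff n]
      apply div_nonneg _ (hupos n).le
      linarith [hr_step n]
    · rw [hdiff n]
      have hnum : l 1 * r (n+1) - r (n+2) ≤ l 1 * (l (m+1) ^ n * r 1) := by
        have := mul_le_mul_of_nonneg_left (hr_geo n) hpos.le
        linarith [hr0 (n+2)]
      have hden : (m:ℝ) * l 1 ^ (n+1) ≤ u (n+1) := by
        rw [hu_eq (n+1) (by omega)]
        linarith [hr0 (n+1)]
      have h1' : (l 1 * r (n+1) - r (n+2)) / u (n+1)
          ≤ (l 1 * (l (m+1) ^ n * r 1)) / ((m:ℝ) * l 1 ^ (n+1)) :=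
        div_le_div₀ (mul_nonneg hpos.le (mul_nonneg (pow_nonneg hp.le n) hR))
          hnum (by positivity) hden
      have h2' : (l 1 * (l (m+1) ^ n * r 1)) / ((m:ℝ) * l 1 ^ (n+1))
          = (l 1 * r 1 / ((m:ℝ) * l (m+1))) * (l (m+1) / l 1) ^ (n+1) := by
        rw [div_pow]
        field_simp
        ring
      have h3' : (l 1 * r 1 / ((m:ℝ) * l (m+1))) * (l (m+1) / l 1) ^ (n+1)
          ≤ (l 1 * r 1 / ((m:ℝ) * l (m+1)) + 1) * (l (m+1) / l 1) ^ (n+1) := by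
        apply mul_le_mul_of_nonneg_right (by linarith)
          (pow_nonneg (div_nonneg hp.le hpos.le) _)
      linarith [h2' ▸ h1']
end

section
/- Let λ : ℕ → ℝ be a nonincreasing summable sequence with λ₀ = 1 and 0 ≤ λᵢ ≤ 1 for all i, and 0 < λ₁ < 1. Suppose λ₁ has multiplicity m ≥ 1, i.e. λ₁ = λ₂ = ⋯ = λ_m > λ_{m+1}. For k ≥ 1 set s_k = Σ_{i=0}^∞ λᵢ^k and u_k = (s_k − 1)^{1/k}. Then there exists a constant C > 0 such that for all k ≥ 1, |u_k − λ₁ · m^{1/k}| ≤ C · k^{−1} · (λ_{m+1}/λ₁)^{k}. In particular, if m = 1 then u_k − λ₁ = O(k^{−1}(λ₂/λ₁)^k), while if m > 1 then u_k − λ₁ = O(k^{−1}). -/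
/-!
Splitting off `λ₀ = 1` and the `m` copies of `λ₁` gives `s_k - 1 = m λ₁^k + R_k` with the tail
`R_k = ∑_{i > m} λᵢ^k ≤ λ_{m+1}^k · (∑_{i > m} λᵢ) / λ_{m+1}` (both sides vanish if
`λ_{m+1} = 0`). Since `(B + R)^p - B^p ≤ p B^p (R / B)` for `0 ≤ p ≤ 1` (Bernoulli), taking
`B = m λ₁^k`, `p = 1/k` yields `0 ≤ u_k - λ₁ m^{1/k} ≤ C k⁻¹ (λ_{m+1}/λ₁)^k`. For `m > 1` the same
inequality with `B = 1` gives `λ₁ m^{1/k} - λ₁ ≤ λ₁ (m - 1) / k`.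
-/

open Finset

theorem Real.abs_rpow_add_sub_rpow_le {B R p : ℝ} (hB : 0 < B) (hR : 0 ≤ R) (hp0 : 0 ≤ p)
    (hp1 : p ≤ 1) : |(B + R) ^ p - B ^ p| ≤ p * B ^ p * (R / B) := by
  have hx : 0 ≤ R / B := div_nonneg hR hB.le
  have hfactor : (B + R) ^ p = B ^ p * (1 + R / B) ^ p := by
    rw [← Real.mul_rpow hB.le (by linarith)]
    congr 1
    field_simp
  have hlow : 1 ≤ (1 + R / B) ^ p := Real.one_le_rpow (by linarith) hp0
  have hup : (1 + R / B) ^ p ≤ 1 + p * (R / B) :=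
    rpow_one_add_le_one_add_mul_self (by linarith) hp0 hp1
  have hBp : 0 < B ^ p := Real.rpow_pos_of_pos hB p
  rw [hfactor, abs_of_nonneg (by nlinarith)]
  nlinarith

theorem Real.abs_rpow_one_div_sub_one_le {x : ℝ} (hx : 1 ≤ x) {k : ℕ} (hk : k ≠ 0) :
    |x ^ ((1 : ℝ) / k) - 1| ≤ (x - 1) / k := by
  have hkinv : (1 : ℝ) / k ≤ 1 :=
    (div_le_one (by positivity)).2 (by exact_mod_cast Nat.one_le_iff_ne_zero.2 hk)
  have h := Real.abs_rpow_add_sub_rpow_le one_pos (sub_nonneg.2 hx) (by positivity) hkinv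
  rwa [add_sub_cancel, Real.one_rpow, mul_one, div_one, one_div_mul_eq_div] at h

theorem pow_le_pow_mul_div {x c : ℝ} (hx : 0 ≤ x) (hxc : x ≤ c) {k : ℕ} (hk : k ≠ 0) :
    x ^ k ≤ c ^ k * (x / c) := by
  obtain rfl | hc := (hx.trans hxc).eq_or_lt
  · simp [le_antisymm hxc hx, zero_pow hk]
  · calc x ^ k = c ^ k * (x / c) ^ k := by rw [← mul_pow, mul_div_cancel₀ _ hc.ne']
      _ ≤ c ^ k * (x / c) := by
        gcongr
        exact pow_le_of_le_one (div_nonneg hx hc.le) ((div_le_one hc).2 hxc) hk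

section PowerSums

variable {ι : Type*} {f : ι → ℝ} {c : ℝ} {k : ℕ}

theorem Summable.pow_of_nonneg_of_le (hf : Summable f) (hf0 : ∀ i, 0 ≤ f i) (hfc : ∀ i, f i ≤ c)
    (hk : k ≠ 0) : Summable fun i ↦ f i ^ k :=
  ((hf.div_const c).mul_left (c ^ k)).of_nonneg_of_le (fun i ↦ pow_nonneg (hf0 i) k)
    fun i ↦ pow_le_pow_mul_div (hf0 i) (hfc i) hk

theorem tsum_pow_le_of_nonneg_of_le (hf : Summable f) (hf0 : ∀ i, 0 ≤ f i) (hfc : ∀ i, f i ≤ c)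
    (hk : k ≠ 0) : ∑' i, f i ^ k ≤ c ^ k * ((∑' i, f i) / c) := by
  rw [← tsum_div_const, ← tsum_mul_left]
  exact (hf.pow_of_nonneg_of_le hf0 hfc hk).tsum_le_tsum
    (fun i ↦ pow_le_pow_mul_div (hf0 i) (hfc i) hk) ((hf.div_const c).mul_left _)

end PowerSums

theorem tsum_eq_add_mul_add_tsum_nat_add {f : ℕ → ℝ} (hf : Summable f) {m : ℕ}
    (hconst : ∀ i, 1 ≤ i → i ≤ m → f i = f 1) :
    ∑' i, f i = f 0 + m * f 1 + ∑' i, f (i + (m + 1)) := by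
  have hblock : ∑ i ∈ range m, f (i + 1) = m * f 1 := by
    rw [sum_congr rfl fun i hi ↦ hconst (i + 1) (by omega) (by simp at hi; omega), sum_const,
      card_range, nsmul_eq_mul]
  rw [← hf.sum_add_tsum_nat_add (m + 1), sum_range_succ', hblock]
  ring

theorem abs_rpow_tsum_pow_sub_one_sub_le (l : ℕ → ℝ) (hmono : Antitone l) (hsum : Summable l)
    (h0 : l 0 = 1) (hbd : ∀ i, 0 ≤ l i ∧ l i ≤ 1) (hpos : 0 < l 1) {m : ℕ} (hm : m ≠ 0)
    (hmult : ∀ i, 1 ≤ i → i ≤ m → l i = l 1) {k : ℕ} (hk : k ≠ 0) :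
    |(∑' i, l i ^ k - 1) ^ ((1 : ℝ) / k) - l 1 * (m : ℝ) ^ ((1 : ℝ) / k)| ≤
      l 1 * ((∑' i, l (i + (m + 1))) / l (m + 1)) * (k : ℝ)⁻¹ * (l (m + 1) / l 1) ^ k := by
  have hsplit : ∑' i, l i ^ k - 1 = m * l 1 ^ k + ∑' i, l (i + (m + 1)) ^ k := by
    rw [tsum_eq_add_mul_add_tsum_nat_add (hsum.pow_of_nonneg_of_le (fun i ↦ (hbd i).1)
      (fun i ↦ (hbd i).2) hk) fun i hi1 hi2 ↦ by simp only [hmult i hi1 hi2], h0, one_pow]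
    ring
  set a := l 1
  set c := l (m + 1)
  set T := ∑' i, l (i + (m + 1))
  set R := ∑' i, l (i + (m + 1)) ^ k
  have hkpos : (0 : ℝ) < k := by positivity
  have hmpos : (0 : ℝ) < m := by positivity
  have hp1 : (1 : ℝ) / k ≤ 1 :=
    (div_le_one hkpos).2 (by exact_mod_cast Nat.one_le_iff_ne_zero.2 hk)
  have htail0 : ∀ i, 0 ≤ l (i + (m + 1)) := fun i ↦ (hbd _).1
  have hR0 : 0 ≤ R := tsum_nonneg fun i ↦ pow_nonneg (htail0 i) k
  have hRle : R ≤ c ^ k * (T / c) :=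
    tsum_pow_le_of_nonneg_of_le ((summable_nat_add_iff (m + 1)).2 hsum) htail0
      (fun i ↦ hmono (Nat.le_add_left _ _)) hk
  have hroot : ((m : ℝ) * a ^ k) ^ ((1 : ℝ) / k) = a * (m : ℝ) ^ ((1 : ℝ) / k) := by
    rw [Real.mul_rpow hmpos.le (by positivity), ← Real.rpow_natCast, ← Real.rpow_mul hpos.le,
      mul_one_div_cancel hkpos.ne', Real.rpow_one, mul_comm]
  have hmroot : (m : ℝ) ^ ((1 : ℝ) / k) ≤ m :=
    Real.rpow_le_self_of_one_le (by exact_mod_cast Nat.one_le_iff_ne_zero.2 hm) hp1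
  calc |(∑' i, l i ^ k - 1) ^ ((1 : ℝ) / k) - a * (m : ℝ) ^ ((1 : ℝ) / k)|
      = |((m : ℝ) * a ^ k + R) ^ ((1 : ℝ) / k) - ((m : ℝ) * a ^ k) ^ ((1 : ℝ) / k)| := by
        rw [hsplit, hroot]
    _ ≤ (1 : ℝ) / k * (a * (m : ℝ) ^ ((1 : ℝ) / k)) * (R / (m * a ^ k)) := by
        rw [← hroot]
        exact Real.abs_rpow_add_sub_rpow_le (by positivity) hR0 (by positivity) hp1
    _ ≤ (1 : ℝ) / k * (a * m) * (c ^ k * (T / c) / (m * a ^ k)) := by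
        gcongr
    _ = a * (T / c) * (k : ℝ)⁻¹ * (c / a) ^ k := by
        rw [div_pow]
        field_simp

theorem upper_bound_rate_general
    (l : ℕ → ℝ) (hmono : Antitone l) (hsum : Summable l)
    (h0 : l 0 = 1) (hbd : ∀ i, 0 ≤ l i ∧ l i ≤ 1)
    (hpos : 0 < l 1)
    (m : ℕ) (hm : 1 ≤ m)
    (hmult : ∀ i : ℕ, 1 ≤ i → i ≤ m → l i = l 1)
    (s : ℕ → ℝ) (hs : ∀ k : ℕ, 1 ≤ k → s k = ∑' i, (l i) ^ k)
    (u : ℕ → ℝ) (hu : ∀ k : ℕ, 1 ≤ k → u k = (s k - 1) ^ ((1 : ℝ) / k)) :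
    (∃ C : ℝ, 0 < C ∧ ∀ k : ℕ, 1 ≤ k →
      |u k - l 1 * (m : ℝ) ^ ((1 : ℝ) / k)| ≤ C * (k : ℝ)⁻¹ * (l (m + 1) / l 1) ^ k) ∧
    (m = 1 → ∃ C : ℝ, 0 < C ∧ ∀ k : ℕ, 1 ≤ k →
      |u k - l 1| ≤ C * (k : ℝ)⁻¹ * (l 2 / l 1) ^ k) ∧
    (1 < m → ∃ C : ℝ, 0 < C ∧ ∀ k : ℕ, 1 ≤ k →
      |u k - l 1| ≤ C * (k : ℝ)⁻¹) := by
  set C := l 1 * ((∑' i, l (i + (m + 1))) / l (m + 1)) + 1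
  have hC : 0 < C := by
    have : 0 ≤ ∑' i, l (i + (m + 1)) := tsum_nonneg fun i ↦ (hbd (i + (m + 1))).1
    have := (hbd (m + 1)).1
    positivity
  have hrate : ∀ k : ℕ, 1 ≤ k →
      |u k - l 1 * (m : ℝ) ^ ((1 : ℝ) / k)| ≤ C * (k : ℝ)⁻¹ * (l (m + 1) / l 1) ^ k := by
    intro k hk
    rw [hu k hk, hs k hk]
    refine (abs_rpow_tsum_pow_sub_one_sub_le l hmono hsum h0 hbd hpos (by omega) hmult
      (by omega)).trans ?_
    have := (hbd (m + 1)).1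
    gcongr
    linarith
  refine ⟨⟨C, hC, hrate⟩, ?_, ?_⟩
  · rintro rfl
    exact ⟨C, hC, fun k hk ↦ by simpa using hrate k hk⟩
  · intro hm1
    have hm1' : (1 : ℝ) ≤ m := by exact_mod_cast hm
    refine ⟨C + l 1 * (m - 1), by nlinarith, fun k hk ↦ ?_⟩
    have hq : (l (m + 1) / l 1) ^ k ≤ 1 :=
      pow_le_one₀ (div_nonneg (hbd _).1 hpos.le) ((div_le_one hpos).2 (hmono (by omega)))
    calc |u k - l 1|
        ≤ |u k - l 1 * (m : ℝ) ^ ((1 : ℝ) / k)| + l 1 * |(m : ℝ) ^ ((1 : ℝ) / k) - 1| := by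
          rw [← abs_of_pos hpos, ← abs_mul, abs_of_pos hpos, mul_sub_one]
          exact abs_sub_le _ _ _
      _ ≤ C * (k : ℝ)⁻¹ * 1 + l 1 * ((m - 1) / k) := by
          gcongr
          · exact (hrate k hk).trans (by gcongr)
          · exact Real.abs_rpow_one_div_sub_one_le hm1' (by omega)
      _ = (C + l 1 * (m - 1)) * (k : ℝ)⁻¹ := by ring

/-- Suppose `0 < l 1 < 1` and `l 1` has multiplicity `m ≥ 1`.
With `s k = ∑' i, (l i) ^ k` and `u k = (s k - 1) ^ (1/k)`, there is a
constant `C > 0` with `|u k - l 1 * m ^ (1/k)| ≤ C * k⁻¹ * (l (m+1)/l 1) ^ k`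
for all `k ≥ 1`.  In particular, if `m = 1` then
`u k - l 1 = O(k⁻¹ (l 2 / l 1) ^ k)`, while if `m > 1` then
`u k - l 1 = O(k⁻¹)`. -/
theorem upper_bound_rate
    (l : ℕ → ℝ) (hmono : Antitone l) (hsum : Summable l)
    (h0 : l 0 = 1) (hbd : ∀ i, 0 ≤ l i ∧ l i ≤ 1)
    (hpos : 0 < l 1) (h1 : l 1 < 1)
    (m : ℕ) (hm : 1 ≤ m)
    (hmult : ∀ i : ℕ, 1 ≤ i → i ≤ m → l i = l 1)
    (hgap : l (m + 1) < l 1)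
    (s : ℕ → ℝ) (hs : ∀ k : ℕ, 1 ≤ k → s k = ∑' i, (l i) ^ k)
    (u : ℕ → ℝ) (hu : ∀ k : ℕ, 1 ≤ k → u k = (s k - 1) ^ ((1 : ℝ) / k)) :
    (∃ C : ℝ, 0 < C ∧ ∀ k : ℕ, 1 ≤ k →
      |u k - l 1 * (m : ℝ) ^ ((1 : ℝ) / k)| ≤ C * (k : ℝ)⁻¹ * (l (m + 1) / l 1) ^ k) ∧
    (m = 1 → ∃ C : ℝ, 0 < C ∧ ∀ k : ℕ, 1 ≤ k →
      |u k - l 1| ≤ C * (k : ℝ)⁻¹ * (l 2 / l 1) ^ k) ∧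
    (1 < m → ∃ C : ℝ, 0 < C ∧ ∀ k : ℕ, 1 ≤ k →
      |u k - l 1| ≤ C * (k : ℝ)⁻¹) :=
  upper_bound_rate_general l hmono hsum h0 hbd hpos m hm hmult s hs u hu
end

section
/- Let r be a Markov kernel on S_V whose invariant density is π_V, and let ψ : S_U → [0,∞) be a probability density with respect to μ that is strictly positive almost everywhere. Suppose ∫_{S_U} p(u,u) μ(du) < ∞. If ∫_{S_U} ∫_{S_V} π_{U|V}(u|v)³ π_{V|U}(v|u) / ψ(u)² ν(dv) μ(du) < ∞, then ∫_{S_U} ∫_{S_V} ∫_{S_V} ( π_{U|V}(u|v)/ψ(u) )² r(v′,dv) π_{V|U}(v′|u) ψ(u) ν(dv′) μ(du) < ∞; that is, the dual Monte Carlo estimator (1/N) Σ_{i=1}^N π_{U|V}(U*_i|V*_i)/ψ(U*_i), with (U*_i,V*_i) iid from ζ(u,v) = ( ∫_{S_V} r(v′,dv) π_{V|U}(v′|u) ν(dv′) ) ψ(u), has finite variance. -/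
/-!
For fixed `u`, bound the inner double integral by the weighted AM–GM inequality
`x y ≤ x² c + y² / c` with `c = ψ(u)² π_V(v') / π_U(u)`. Invariance of `π_V` under `r` turns the
first term into the moment `M(u)` of `hmom`; the second is
`T(u) = ∫ π_{U|V}(u|v) π_{V|U}(v|u) ν(dv)`, which is `p(u,u)` as soon as it is finite (`p` is a
Bochner integral, hence `0` otherwise). Finiteness a.e. comes from `ρ ≤ ρ³ / ψ² + ψ`, which gives
`T(u) ≤ M(u) + ψ(u)`. Hence the variance is at most `∫ M(u) μ(du) + ∫ p(u,u) μ(du)`.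
-/

open MeasureTheory ProbabilityTheory
open scoped ENNReal

theorem ENNReal.mul_le_sq_mul_add_sq_div (x y c : ℝ≥0∞) : x * y ≤ x ^ 2 * c + y ^ 2 / c := by
  rcases le_or_gt y (x * c) with hy | hy
  · calc x * y ≤ x * (x * c) := mul_le_mul_right hy x
      _ = x ^ 2 * c := by ring
      _ ≤ _ := le_self_add
  rcases eq_or_ne c ⊤ with rfl | hc
  · obtain rfl : x = 0 := by
      by_contra hx
      simp [ENNReal.mul_top hx] at hy
    simp
  have hx : x ≤ y / c := (ENNReal.le_div_iff_mul_le (Or.inr hy.ne_bot) (Or.inl hc)).2 hy.le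
  calc x * y ≤ y / c * y := mul_le_mul_left hx y
    _ = y ^ 2 / c := by rw [sq, ENNReal.mul_div_right_comm]
    _ ≤ _ := le_add_self

theorem le_pow_three_div_sq_add {ρ k : ℝ} (hρ : 0 ≤ ρ) (hk : 0 < k) : ρ ≤ ρ ^ 3 / k ^ 2 + k := by
  rcases le_total ρ k with h | h
  · have : 0 ≤ ρ ^ 3 / k ^ 2 := by positivity
    linarith
  · have : ρ ≤ ρ ^ 3 / k ^ 2 := by
      rw [le_div_iff₀ (by positivity)]
      nlinarith [mul_le_mul h h hk.le hρ]
    linarith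

namespace ProbabilityTheory.Kernel

variable {α : Type*} [MeasurableSpace α] {κ : Kernel α α} {ν : Measure α} {g : α → ℝ≥0∞}

theorem invariant_withDensity (hg : Measurable g)
    (h : ∀ A, MeasurableSet A → ∫⁻ x, κ x A * g x ∂ν = ∫⁻ x in A, g x ∂ν) :
    κ.Invariant (ν.withDensity g) := by
  ext A hA
  rw [Measure.bind_apply hA κ.aemeasurable,
    lintegral_withDensity_eq_lintegral_mul _ hg (κ.measurable_coe hA), withDensity_apply _ hA,
    ← h A hA]
  simp only [Pi.mul_apply, mul_comm]

theorem Invariant.lintegral_lintegral_mul (hκ : κ.Invariant (ν.withDensity g)) (hg : Measurable g)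
    {F : α → ℝ≥0∞} (hF : Measurable F) :
    ∫⁻ y, (∫⁻ x, F x ∂κ y) * g y ∂ν = ∫⁻ x, F x * g x ∂ν := by
  have h := Measure.lintegral_bind κ.aemeasurable hF.aemeasurable (m := ν.withDensity g)
  rw [hκ.def, lintegral_withDensity_eq_lintegral_mul _ hg hF,
    lintegral_withDensity_eq_lintegral_mul _ hg hF.lintegral_kernel] at h
  simpa only [Pi.mul_apply, mul_comm] using h.symm

theorem Invariant.lintegral_lintegral_mul_le [IsMarkovKernel κ]
    (hκ : κ.Invariant (ν.withDensity g)) (hg : Measurable g) {F : α → ℝ≥0∞} (hF : Measurable F)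
    (c : ℝ≥0∞) (G : α → ℝ≥0∞) :
    ∫⁻ y, (∫⁻ x, F x ∂κ y) * G y ∂ν
      ≤ c * ∫⁻ x, F x ^ 2 * g x ∂ν + ∫⁻ y, G y ^ 2 / (c * g y) ∂ν := by
  have hF2 : Measurable fun x => F x ^ 2 := hF.pow_const 2
  calc ∫⁻ y, (∫⁻ x, F x ∂κ y) * G y ∂ν
      = ∫⁻ y, ∫⁻ x, F x * G y ∂κ y ∂ν := by simp_rw [lintegral_mul_const _ hF]
    _ ≤ ∫⁻ y, ∫⁻ x, (F x ^ 2 * (c * g y) + G y ^ 2 / (c * g y)) ∂κ y ∂ν :=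
        lintegral_mono fun y => lintegral_mono fun x => ENNReal.mul_le_sq_mul_add_sq_div _ _ _
    _ = ∫⁻ y, (c * ((∫⁻ x, F x ^ 2 ∂κ y) * g y) + G y ^ 2 / (c * g y)) ∂ν := by
        refine lintegral_congr fun y => ?_
        rw [lintegral_add_right _ measurable_const, lintegral_mul_const _ hF2,
          MeasureTheory.lintegral_const, measure_univ, mul_one]
        ring
    _ = c * ∫⁻ x, F x ^ 2 * g x ∂ν + ∫⁻ y, G y ^ 2 / (c * g y) ∂ν := by
        have h : Measurable fun y => (∫⁻ x, F x ^ 2 ∂κ y) * g y := hF2.lintegral_kernel.mul hg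
        rw [lintegral_add_left (h.const_mul c), lintegral_const_mul _ h,
          hκ.lintegral_lintegral_mul hg hF2]

end ProbabilityTheory.Kernel

namespace MeasureTheory

variable {α : Type*} [MeasurableSpace α] {μ : Measure α}

theorem ae_ne_top_of_eq_top_imp_eq_top {f g : α → ℝ≥0∞} (hg : Measurable g)
    (hf : ∫⁻ x, f x ∂μ ≠ ∞) (hfg : ∀ᵐ x ∂μ, g x = ∞ → f x = ∞) : ∀ᵐ x ∂μ, g x ≠ ∞ := by
  have hB : MeasurableSet {x | g x = ∞} := hg (measurableSet_singleton ∞)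
  have hle : ∫⁻ x, {x | g x = ∞}.indicator (fun _ => ∞) x ∂μ ≤ ∫⁻ x, f x ∂μ := by
    refine lintegral_mono_ae ?_
    filter_upwards [hfg] with x hx
    by_cases h : g x = ∞
    · simp [Set.indicator_of_mem (show x ∈ {x | g x = ∞} from h), hx h]
    · simp [Set.indicator_of_notMem (show x ∉ {x | g x = ∞} from h)]
  filter_upwards [ae_lt_top (measurable_const.indicator hB) (ne_top_of_le_ne_top hf hle)]
    with x hx h
  simp [Set.indicator_of_mem (show x ∈ {x | g x = ∞} from h)] at hx

theorem lintegral_ofReal_eq_ofReal_integral {f : α → ℝ} (hfm : AEStronglyMeasurable f μ)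
    (hf : 0 ≤ᵐ[μ] f) (hfin : ∫⁻ x, ENNReal.ofReal (f x) ∂μ ≠ ∞) :
    ∫⁻ x, ENNReal.ofReal (f x) ∂μ = ENNReal.ofReal (∫ x, f x ∂μ) :=
  (ofReal_integral_eq_lintegral_ofReal ((lintegral_ofReal_ne_top_iff_integrable hfm hf).1 hfin)
    hf).symm

end MeasureTheory

section SecondMoment

variable {β : Type*} [MeasurableSpace β] {ν : Measure β} {f piV : β → ℝ} {t k : ℝ}

theorem lintegral_kernel_sq_ratio_mul_le {κ : Kernel β β} [IsMarkovKernel κ]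
    (hκ : κ.Invariant (ν.withDensity fun y => ENNReal.ofReal (piV y))) (hpiV : Measurable piV)
    (hpiV_pos : ∀ᵐ y ∂ν, 0 < piV y) (hf : Measurable f) (hf_nn : ∀ x, 0 ≤ f x)
    (ht : 0 < t) (hk : 0 < k) :
    ∫⁻ y, (∫⁻ x, ENNReal.ofReal ((f x / (piV x * k)) ^ 2) ∂κ y) * ENNReal.ofReal (f y / t * k) ∂ν
      ≤ ∫⁻ x, ENNReal.ofReal ((f x / piV x) ^ 3 * (f x / t) / k ^ 2) ∂ν
        + ∫⁻ x, ENNReal.ofReal (f x / piV x * (f x / t)) ∂ν := by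
  refine (hκ.lintegral_lintegral_mul_le hpiV.ennreal_ofReal (by fun_prop)
    (ENNReal.ofReal (k ^ 2 / t)) _).trans_eq ?_
  rw [← lintegral_const_mul' _ _ ENNReal.ofReal_ne_top]
  congr 1 <;> refine lintegral_congr_ae ?_ <;> filter_upwards [hpiV_pos] with x hx
  · rw [← ENNReal.ofReal_pow (by positivity), ← ENNReal.ofReal_mul (by positivity),
      ← ENNReal.ofReal_mul (by positivity)]
    congr 1
    field_simp
  · have := hf_nn x
    rw [← ENNReal.ofReal_pow (by positivity), ← ENNReal.ofReal_mul (by positivity),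
      ← ENNReal.ofReal_div_of_pos (by positivity)]
    congr 1
    field_simp

theorem lintegral_ratio_mul_le (hf : Measurable f) (hf_nn : ∀ x, 0 ≤ f x) (hpiV : Measurable piV)
    (hpiV_pos : ∀ᵐ y ∂ν, 0 < piV y) (ht_eq : t = ∫ x, f x ∂ν) (ht : 0 < t) (hk : 0 < k) :
    ∫⁻ x, ENNReal.ofReal (f x / piV x * (f x / t)) ∂ν
      ≤ ∫⁻ x, ENNReal.ofReal ((f x / piV x) ^ 3 * (f x / t) / k ^ 2) ∂ν + ENNReal.ofReal k := by
  have hf_int : Integrable f ν := Integrable.of_integral_ne_zero (ht_eq ▸ ht.ne')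
  have hmass : ENNReal.ofReal k = ∫⁻ x, ENNReal.ofReal (k / t * f x) ∂ν := by
    rw [← ofReal_integral_eq_lintegral_ofReal (hf_int.const_mul _)
      (Filter.Eventually.of_forall fun x => by have := hf_nn x; positivity),
      integral_const_mul, ← ht_eq, div_mul_cancel₀ k ht.ne']
  rw [hmass, ← lintegral_add_left (by fun_prop)]
  refine lintegral_mono_ae ?_
  filter_upwards [hpiV_pos] with x hx
  have := hf_nn x
  rw [← ENNReal.ofReal_add (by positivity) (by positivity)]
  refine ENNReal.ofReal_le_ofReal ?_
  calc f x / piV x * (f x / t)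
      ≤ ((f x / piV x) ^ 3 / k ^ 2 + k) * (f x / t) :=
        mul_le_mul_of_nonneg_right (le_pow_three_div_sq_add (by positivity) hk) (by positivity)
    _ = _ := by field_simp

end SecondMoment

theorem dual_monte_carlo_estimator_finite_variance_general
    {SU SV : Type*} [MeasurableSpace SU] [MeasurableSpace SV]
    (μ : Measure SU) (ν : Measure SV) [SigmaFinite μ] [SigmaFinite ν]
    (piUV : SU → SV → ℝ)
    (hmeas : Measurable (Function.uncurry piUV))
    (hnn : ∀ u v, 0 ≤ piUV u v)
    (piU : SU → ℝ) (hpiU : ∀ u, piU u = ∫ v, piUV u v ∂ν)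
    (piV : SV → ℝ) (hpiV : ∀ v, piV v = ∫ u, piUV u v ∂μ)
    (hUpos : ∀ᵐ u ∂μ, 0 < piU u)
    (hVpos : ∀ᵐ v ∂ν, 0 < piV v)
    (p : SU → SU → ℝ)
    (hp : ∀ u u', p u u' = ∫ v, (piUV u' v / piV v) * (piUV u v / piU u) ∂ν)
    (r : ProbabilityTheory.Kernel SV SV) [ProbabilityTheory.IsMarkovKernel r]
    (hinv : ∀ A : Set SV, MeasurableSet A →
      ∫⁻ v, r v A * ENNReal.ofReal (piV v) ∂ν = ∫⁻ v in A, ENNReal.ofReal (piV v) ∂ν)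
    (psi : SU → ℝ)
    (hpsi_pos : ∀ᵐ u ∂μ, 0 < psi u)
    (hint : ∫⁻ u, ENNReal.ofReal (p u u) ∂μ < ⊤)
    (hmom : ∫⁻ u, ∫⁻ v, ENNReal.ofReal
        ((piUV u v / piV v) ^ 3 * (piUV u v / piU u) / (psi u) ^ 2) ∂ν ∂μ < ⊤) :
    ∫⁻ u, ∫⁻ v', (∫⁻ v, ENNReal.ofReal ((piUV u v / (piV v * psi u)) ^ 2) ∂(r v')) *
      ENNReal.ofReal ((piUV u v' / piU u) * psi u) ∂ν ∂μ < ⊤ := by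
  have hpiV_meas : Measurable piV := by
    rw [funext hpiV]; exact hmeas.stronglyMeasurable.integral_prod_left.measurable
  have hpiU_meas : Measurable piU := by
    rw [funext hpiU]; exact hmeas.stronglyMeasurable.integral_prod_right.measurable
  have hsec_meas (u : SU) : Measurable (piUV u) := hmeas.comp measurable_prodMk_left
  have hr : r.Invariant (ν.withDensity fun v => ENNReal.ofReal (piV v)) :=
    Kernel.invariant_withDensity hpiV_meas.ennreal_ofReal hinv
  set M := fun u => ∫⁻ v, ENNReal.ofReal
    ((piUV u v / piV v) ^ 3 * (piUV u v / piU u) / (psi u) ^ 2) ∂ν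
  set T := fun u => ∫⁻ v, ENNReal.ofReal (piUV u v / piV v * (piUV u v / piU u)) ∂ν
  have hT_meas : Measurable T :=
    Measurable.lintegral_prod_right (f := fun u v => ENNReal.ofReal _)
      ((hmeas.div (hpiV_meas.comp measurable_snd)).mul
        (hmeas.div (hpiU_meas.comp measurable_fst))).ennreal_ofReal
  have hT_le : ∀ᵐ u ∂μ, T u ≤ M u + ENNReal.ofReal (psi u) := by
    filter_upwards [hUpos, hpsi_pos] with u hu hψ
    exact lintegral_ratio_mul_le (hsec_meas u) (hnn u) hpiV_meas hVpos (hpiU u) hu hψ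
  have hT_ne_top : ∀ᵐ u ∂μ, T u ≠ ⊤ :=
    ae_ne_top_of_eq_top_imp_eq_top hT_meas hmom.ne <| by
      filter_upwards [hT_le] with u hu hT
      simpa [hT] using hu
  have hT_eq : ∀ᵐ u ∂μ, T u = ENNReal.ofReal (p u u) := by
    filter_upwards [hT_ne_top, hUpos] with u hT hu
    have h_nn : 0 ≤ᵐ[ν] fun v => piUV u v / piV v * (piUV u v / piU u) := by
      filter_upwards [hVpos] with v hv
      have := hnn u v
      positivity
    rw [hp]
    exact lintegral_ofReal_eq_ofReal_integral (by fun_prop) h_nn hT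
  calc _ ≤ ∫⁻ u, (M u + T u) ∂μ := by
        refine lintegral_mono_ae ?_
        filter_upwards [hUpos, hpsi_pos] with u hu hψ
        exact lintegral_kernel_sq_ratio_mul_le hr hpiV_meas hVpos (hsec_meas u) (hnn u) hu hψ
    _ = ∫⁻ u, M u ∂μ + ∫⁻ u, ENNReal.ofReal (p u u) ∂μ := by
        rw [lintegral_add_right _ hT_meas, lintegral_congr_ae hT_eq]
    _ < ⊤ := ENNReal.add_lt_top.2 ⟨hmom, hint⟩

/-- Let `r` be a Markov kernel on `S_V` with invariant density
`π_V`, and let `ψ` be an a.e. positive probability density on `S_U`.  Suppose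
`∫ p(u,u) μ(du) < ∞`.  If
`∫∫ π_{U|V}(u|v)³ π_{V|U}(v|u) / ψ(u)² ν(dv) μ(du) < ∞`, then
`∫∫∫ (π_{U|V}(u|v)/ψ(u))² r(v',dv) π_{V|U}(v'|u) ψ(u) ν(dv') μ(du) < ∞`,
i.e. the dual Monte Carlo estimator based on `ζ` has finite variance. -/
theorem dual_monte_carlo_estimator_finite_variance
    {SU SV : Type*} [MeasurableSpace SU] [MeasurableSpace SV]
    [MeasurableSpace.CountablyGenerated SU] [MeasurableSpace.CountablyGenerated SV]
    (μ : Measure SU) (ν : Measure SV) [SigmaFinite μ] [SigmaFinite ν]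
    (piUV : SU → SV → ℝ)
    (hmeas : Measurable (Function.uncurry piUV))
    (hnn : ∀ u v, 0 ≤ piUV u v)
    (hprob : ∫⁻ q, ENNReal.ofReal (piUV q.1 q.2) ∂(μ.prod ν) = 1)
    (piU : SU → ℝ) (hpiU : ∀ u, piU u = ∫ v, piUV u v ∂ν)
    (piV : SV → ℝ) (hpiV : ∀ v, piV v = ∫ u, piUV u v ∂μ)
    (hUpos : ∀ᵐ u ∂μ, 0 < piU u)
    (hVpos : ∀ᵐ v ∂ν, 0 < piV v)
    (p : SU → SU → ℝ)
    (hp : ∀ u u', p u u' = ∫ v, (piUV u' v / piV v) * (piUV u v / piU u) ∂ν)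
    (r : ProbabilityTheory.Kernel SV SV) [ProbabilityTheory.IsMarkovKernel r]
    (hinv : ∀ A : Set SV, MeasurableSet A →
      ∫⁻ v, r v A * ENNReal.ofReal (piV v) ∂ν = ∫⁻ v in A, ENNReal.ofReal (piV v) ∂ν)
    (psi : SU → ℝ)
    (hpsi_nn : ∀ u, 0 ≤ psi u)
    (hpsi_prob : ∫⁻ u, ENNReal.ofReal (psi u) ∂μ = 1)
    (hpsi_pos : ∀ᵐ u ∂μ, 0 < psi u)
    (hint : ∫⁻ u, ENNReal.ofReal (p u u) ∂μ < ⊤)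
    (hmom : ∫⁻ u, ∫⁻ v, ENNReal.ofReal
        ((piUV u v / piV v) ^ 3 * (piUV u v / piU u) / (psi u) ^ 2) ∂ν ∂μ < ⊤) :
    ∫⁻ u, ∫⁻ v', (∫⁻ v, ENNReal.ofReal ((piUV u v / (piV v * psi u)) ^ 2) ∂(r v')) *
      ENNReal.ofReal ((piUV u v' / piU u) * psi u) ∂ν ∂μ < ⊤ :=
  dual_monte_carlo_estimator_finite_variance_general μ ν piUV hmeas hnn piU hpiU piV hpiV hUpos
    hVpos p hp r hinv psi hpsi_pos hint hmom
end

section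
/- In the Bayesian probit regression setup, suppose that for every polynomial function t : ℝ^p → ℝ one has ∫_{ℝ^p} |t(β)| p(β,β) dβ < ∞, where p(β,β) = ∫_{ℝ^n} π_{U|V}(β|z) π_{V|U}(z|β) dz. Let ψ be the density of a p-variate t-distribution: ψ(β) = c · (1 + (1/a)(β − b)ᵀ Σ⁻¹ (β − b))^{−(a+p)/2} for some b ∈ ℝ^p, positive definite Σ ∈ ℝ^{p×p}, positive integer a, and normalizing constant c > 0. Then ∫_{ℝ^p} ∫_{ℝ^n} π_{U|V}(β|z)³ π_{V|U}(z|β) / ψ(β)² dz dβ < ∞ (so the dual Monte Carlo estimator of s_k based on ψ has finite variance). -/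
open MeasureTheory Matrix

/-!
Since `XᵀX + Q` is positive definite, `π_{U|V}(β|z)` is bounded by its normalising constant `C`,
so `π_{U|V}³ π_{V|U} / ψ² ≤ (C² / ψ(β)²) · π_{U|V} π_{V|U}`. For a multivariate t-density,
`1 / ψ²` is a polynomial in `β`, hence integrating over `z` bounds the inner integral by
`|t(β)| p(β, β)` for a polynomial `t`, and the moment hypothesis finishes the proof.
-/

lemma Matrix.PosSemidef.exp_neg_half_dotProduct_mulVec_le_one {ι : Type*} [Fintype ι]
    {M : Matrix ι ι ℝ} (hM : M.PosSemidef) (v : ι → ℝ) :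
    Real.exp (-(1 / 2) * (v ⬝ᵥ (M *ᵥ v))) ≤ 1 := by
  have hv : 0 ≤ v ⬝ᵥ (M *ᵥ v) := by simpa using hM.dotProduct_mulVec_nonneg v
  rw [Real.exp_le_one_iff]
  linarith

/-- One factor of `π_{V|U}` before normalisation, with `m = x_iᵀβ` and `s = y_i - 1/2`. -/
noncomputable def truncNormalKernel (m s t : ℝ) : ℝ :=
  Real.exp (-(t - m) ^ 2 / 2) * if 0 < s * t then 1 else 0

lemma truncNormalKernel_nonneg (m s t : ℝ) : 0 ≤ truncNormalKernel m s t :=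
  mul_nonneg (Real.exp_nonneg _) (by split_ifs <;> norm_num)

lemma integrable_truncNormalKernel (m s : ℝ) : Integrable (truncNormalKernel m s) := by
  have hgauss : Integrable fun t : ℝ => Real.exp (-(t - m) ^ 2 / 2) := by
    refine ((integrable_exp_neg_mul_sq (by norm_num : (0 : ℝ) < 1 / 2)).comp_sub_right m).congr
      (ae_of_all _ fun t => ?_)
    exact congrArg Real.exp (by ring)
  have hind : AEStronglyMeasurable (fun t : ℝ => if 0 < s * t then (1 : ℝ) else 0) volume :=
    (Measurable.ite (measurableSet_lt measurable_const (measurable_const.mul measurable_id))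
      measurable_const measurable_const).aestronglyMeasurable
  refine (hgauss.bdd_mul (c := 1) hind (ae_of_all _ fun t => ?_)).congr
    (ae_of_all _ fun t => mul_comm _ _)
  split_ifs <;> norm_num

lemma integrable_prod_truncNormalKernel_div {ι : Type*} [Fintype ι] (m s d : ι → ℝ) :
    Integrable fun z : ι → ℝ => ∏ i, truncNormalKernel (m i) (s i) (z i) / d i :=
  Integrable.fintype_prod (f := fun i t => truncNormalKernel (m i) (s i) t / d i)
    fun _ => (integrable_truncNormalKernel _ _).div_const _

lemma inv_sq_mul_rpow_neg_half {u : ℝ} (hu : 0 < u) (c k : ℝ) :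
    ((c * u ^ (-(k / 2))) ^ 2)⁻¹ = (c ^ 2)⁻¹ * u ^ k := by
  rw [mul_pow, ← Real.rpow_natCast (u ^ _) 2, ← Real.rpow_mul hu.le, mul_inv,
    ← Real.rpow_neg hu.le]
  congr 2
  push_cast
  ring

noncomputable def quadFormPoly {ι R : Type*} [Fintype ι] [CommRing R] (A : Matrix ι ι R) (b : ι → R) :
    MvPolynomial ι R :=
  ∑ i, ∑ j, MvPolynomial.C (A i j) * (MvPolynomial.X i - MvPolynomial.C (b i)) *
    (MvPolynomial.X j - MvPolynomial.C (b j))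

lemma eval_quadFormPoly {ι R : Type*} [Fintype ι] [CommRing R] (A : Matrix ι ι R)
    (b β : ι → R) : MvPolynomial.eval β (quadFormPoly A b) = (β - b) ⬝ᵥ (A *ᵥ (β - b)) := by
  simp only [quadFormPoly, map_sum, map_mul, map_sub, MvPolynomial.eval_C, MvPolynomial.eval_X,
    dotProduct, mulVec, Pi.sub_apply, Finset.mul_sum]
  exact Finset.sum_congr rfl fun i _ => Finset.sum_congr rfl fun j _ => by ring

lemma pow_three_mul_div_le {x y d C : ℝ} (hx : 0 ≤ x) (hxC : x ≤ C) (hy : 0 ≤ y) (hd : 0 ≤ d) :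
    x ^ 3 * y / d ≤ C ^ 2 * d⁻¹ * (x * y) := by
  have hsq : x ^ 2 ≤ C ^ 2 := pow_le_pow_left₀ hx hxC 2
  calc x ^ 3 * y / d = x ^ 2 * (d⁻¹ * (x * y)) := by ring
    _ ≤ C ^ 2 * (d⁻¹ * (x * y)) := by gcongr
    _ = C ^ 2 * d⁻¹ * (x * y) := by ring

lemma lintegral_ofReal_le_ofReal_mul_integral {α : Type*} [MeasurableSpace α] {μ : Measure α}
    {f g : α → ℝ} {K : ℝ} (hf : Integrable f μ) (hf0 : 0 ≤ f) (hK : 0 ≤ K)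
    (hgf : ∀ x, g x ≤ K * f x) :
    ∫⁻ x, ENNReal.ofReal (g x) ∂μ ≤ ENNReal.ofReal (K * ∫ x, f x ∂μ) :=
  calc ∫⁻ x, ENNReal.ofReal (g x) ∂μ ≤ ∫⁻ x, ENNReal.ofReal K * ENNReal.ofReal (f x) ∂μ :=
        lintegral_mono fun x => (ENNReal.ofReal_le_ofReal (hgf x)).trans_eq (ENNReal.ofReal_mul hK)
    _ = ENNReal.ofReal (K * ∫ x, f x ∂μ) := by
        rw [lintegral_const_mul' _ _ ENNReal.ofReal_ne_top,
          ← ofReal_integral_eq_lintegral_ofReal hf (ae_of_all _ hf0), ENNReal.ofReal_mul hK]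

theorem probit_dual_estimator_finite_variance_general
    (n p : ℕ) (X : Matrix (Fin n) (Fin p) ℝ) (y : Fin n → ℝ)
    (w : Fin p → ℝ) (Q : Matrix (Fin p) (Fin p) ℝ) (hQ : Q.PosDef)
    (piBeta : (Fin n → ℝ) → (Fin p → ℝ) → ℝ)
    (hpiBeta : ∀ (z : Fin n → ℝ) (β : Fin p → ℝ), piBeta z β =
      Real.sqrt (Xᵀ * X + Q).det / (2 * Real.pi) ^ ((p : ℝ) / 2) *
        Real.exp (-(1 / 2) * ((β - (Xᵀ * X + Q)⁻¹ *ᵥ (w + Xᵀ *ᵥ z)) ⬝ᵥ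
          ((Xᵀ * X + Q) *ᵥ (β - (Xᵀ * X + Q)⁻¹ *ᵥ (w + Xᵀ *ᵥ z))))))
    (piZ : (Fin p → ℝ) → (Fin n → ℝ) → ℝ)
    (hpiZ : ∀ (β : Fin p → ℝ) (z : Fin n → ℝ), piZ β z = ∏ i,
      (Real.exp (-(z i - (X *ᵥ β) i) ^ 2 / 2) *
          (if 0 < (y i - 1 / 2) * z i then 1 else 0)) /
        (∫ t : ℝ, Real.exp (-(t - (X *ᵥ β) i) ^ 2 / 2) *
          (if 0 < (y i - 1 / 2) * t then 1 else 0)))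
    (pdiag : (Fin p → ℝ) → ℝ)
    (hpdiag : ∀ β : Fin p → ℝ, pdiag β = ∫ z : Fin n → ℝ, piBeta z β * piZ β z)
    (hpoly : ∀ t : MvPolynomial (Fin p) ℝ,
      ∫⁻ β : Fin p → ℝ, ENNReal.ofReal (|MvPolynomial.eval β t| * pdiag β) < ⊤)
    (b : Fin p → ℝ) (S : Matrix (Fin p) (Fin p) ℝ) (hS : S.PosDef)
    (a : ℕ) (c : ℝ)
    (psi : (Fin p → ℝ) → ℝ)
    (hpsi : ∀ β : Fin p → ℝ, psi β =
      c * (1 + (1 / (a : ℝ)) * ((β - b) ⬝ᵥ (S⁻¹ *ᵥ (β - b)))) ^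
        (-(((a : ℝ) + p) / 2))) :
    ∫⁻ β : Fin p → ℝ, ∫⁻ z : Fin n → ℝ,
      ENNReal.ofReal (piBeta z β ^ 3 * piZ β z / psi β ^ 2) < ⊤ := by
  set C := Real.sqrt (Xᵀ * X + Q).det / (2 * Real.pi) ^ ((p : ℝ) / 2)
  have hM : (Xᵀ * X + Q).PosSemidef := by
    simpa using (posSemidef_conjTranspose_mul_self X).add hQ.posSemidef
  have hC : 0 ≤ C := by positivity
  have hpiBeta_nonneg (z β) : 0 ≤ piBeta z β := by rw [hpiBeta]; positivity
  have hpiBeta_le (z β) : piBeta z β ≤ C := by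
    rw [hpiBeta]
    exact mul_le_of_le_one_right hC (hM.exp_neg_half_dotProduct_mulVec_le_one _)
  have hpiZ_nonneg (β z) : 0 ≤ piZ β z := by
    rw [hpiZ]
    exact Finset.prod_nonneg fun i _ => div_nonneg (truncNormalKernel_nonneg _ _ _)
      (integral_nonneg (truncNormalKernel_nonneg _ _))
  have hintegrable (β) : Integrable fun z => piBeta z β * piZ β z := by
    refine ((integrable_prod_truncNormalKernel_div _ _ _).congr
      (ae_of_all _ fun z => (hpiZ β z).symm)).bdd_mul (c := C) ?_
      (ae_of_all _ fun z => by simpa [abs_of_nonneg (hpiBeta_nonneg z β)] using hpiBeta_le z β)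
    simp_rw [hpiBeta]
    exact (by fun_prop : Continuous _).aestronglyMeasurable
  let T : MvPolynomial (Fin p) ℝ := MvPolynomial.C (C ^ 2 * (c ^ 2)⁻¹) *
    (1 + MvPolynomial.C (1 / (a : ℝ)) * quadFormPoly S⁻¹ b) ^ (a + p)
  have hT (β) : C ^ 2 * (psi β ^ 2)⁻¹ = |MvPolynomial.eval β T| := by
    have hu : 1 ≤ 1 + (1 / (a : ℝ)) * ((β - b) ⬝ᵥ (S⁻¹ *ᵥ (β - b))) :=
      le_add_of_nonneg_right (mul_nonneg (by positivity)
        (by simpa using hS.inv.posSemidef.dotProduct_mulVec_nonneg (β - b)))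
    rw [hpsi, inv_sq_mul_rpow_neg_half (by linarith), ← Nat.cast_add, Real.rpow_natCast]
    simp only [T, map_mul, map_pow, map_add, map_one, MvPolynomial.eval_C, eval_quadFormPoly]
    rw [abs_of_nonneg (by positivity)]
    ring
  refine lt_of_le_of_lt (lintegral_mono fun β => ?_) (hpoly T)
  rw [← hT, hpdiag]
  exact lintegral_ofReal_le_ofReal_mul_integral (hintegrable β)
    (fun z => mul_nonneg (hpiBeta_nonneg z β) (hpiZ_nonneg β z)) (by positivity)
    fun z => pow_three_mul_div_le (hpiBeta_nonneg z β) (hpiBeta_le z β) (hpiZ_nonneg β z)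
      (sq_nonneg _)

/-- In the Bayesian probit regression setup (Albert–Chib DA chain),
if `∫ |t(β)| p(β,β) dβ < ∞` for every polynomial `t`, and `ψ` is a `p`-variate
t-distribution density, then
`∫∫ π_{U|V}(β|z)³ π_{V|U}(z|β) / ψ(β)² dz dβ < ∞`, so the dual Monte Carlo
estimator of `s_k` based on `ψ` has finite variance. -/
theorem probit_dual_estimator_finite_variance
    (n p : ℕ) (X : Matrix (Fin n) (Fin p) ℝ) (y : Fin n → ℝ)
    (hy : ∀ i, y i = 0 ∨ y i = 1)
    (w : Fin p → ℝ) (Q : Matrix (Fin p) (Fin p) ℝ) (hQ : Q.PosDef)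
    (piBeta : (Fin n → ℝ) → (Fin p → ℝ) → ℝ)
    (hpiBeta : ∀ (z : Fin n → ℝ) (β : Fin p → ℝ), piBeta z β =
      Real.sqrt (Xᵀ * X + Q).det / (2 * Real.pi) ^ ((p : ℝ) / 2) *
        Real.exp (-(1 / 2) * ((β - (Xᵀ * X + Q)⁻¹ *ᵥ (w + Xᵀ *ᵥ z)) ⬝ᵥ
          ((Xᵀ * X + Q) *ᵥ (β - (Xᵀ * X + Q)⁻¹ *ᵥ (w + Xᵀ *ᵥ z))))))
    (piZ : (Fin p → ℝ) → (Fin n → ℝ) → ℝ)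
    (hpiZ : ∀ (β : Fin p → ℝ) (z : Fin n → ℝ), piZ β z = ∏ i,
      (Real.exp (-(z i - (X *ᵥ β) i) ^ 2 / 2) *
          (if 0 < (y i - 1 / 2) * z i then 1 else 0)) /
        (∫ t : ℝ, Real.exp (-(t - (X *ᵥ β) i) ^ 2 / 2) *
          (if 0 < (y i - 1 / 2) * t then 1 else 0)))
    (pdiag : (Fin p → ℝ) → ℝ)
    (hpdiag : ∀ β : Fin p → ℝ, pdiag β = ∫ z : Fin n → ℝ, piBeta z β * piZ β z)
    (hpoly : ∀ t : MvPolynomial (Fin p) ℝ,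
      ∫⁻ β : Fin p → ℝ, ENNReal.ofReal (|MvPolynomial.eval β t| * pdiag β) < ⊤)
    (b : Fin p → ℝ) (S : Matrix (Fin p) (Fin p) ℝ) (hS : S.PosDef)
    (a : ℕ) (ha : 0 < a) (c : ℝ) (hc : 0 < c)
    (psi : (Fin p → ℝ) → ℝ)
    (hpsi : ∀ β : Fin p → ℝ, psi β =
      c * (1 + (1 / (a : ℝ)) * ((β - b) ⬝ᵥ (S⁻¹ *ᵥ (β - b)))) ^
        (-(((a : ℝ) + p) / 2))) :
    ∫⁻ β : Fin p → ℝ, ∫⁻ z : Fin n → ℝ,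
      ENNReal.ofReal (piBeta z β ^ 3 * piZ β z / psi β ^ 2) < ⊤ :=
  probit_dual_estimator_finite_variance_general n p X y w Q hQ piBeta hpiBeta piZ hpiZ pdiag hpdiag
    hpoly b S hS a c psi hpsi
end

section
/- The function (u,v) ↦ exp(−8v² + 12uv − 4u²) is not integrable over ℝ²; that is, ∫_ℝ ∫_ℝ exp(−8v² + 12uv − 4u²) dv du = ∞. -/
/-- The function `(u,v) ↦ exp(−8v² + 12uv − 4u²)` is not
integrable over `ℝ²`: its (double) integral is infinite. -/
theorem gaussian_importance_infinite_variance :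
    ∫⁻ u : ℝ, ∫⁻ v : ℝ,
      ENNReal.ofReal (Real.exp (-8 * v ^ 2 + 12 * u * v - 4 * u ^ 2)) = ⊤ := by
  have key : ∀ u : ℝ, ENNReal.ofReal (Real.exp (-8)) ≤
      ∫⁻ v : ℝ, ENNReal.ofReal (Real.exp (-8 * v ^ 2 + 12 * u * v - 4 * u ^ 2)) := by
    intro u
    have h1 : ENNReal.ofReal (Real.exp (-8)) =
        ∫⁻ v in Set.Icc (3*u/4) (3*u/4 + 1), ENNReal.ofReal (Real.exp (-8)) := by
      rw [MeasureTheory.setLIntegral_const, Real.volume_Icc]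
      norm_num
    rw [h1]
    refine le_trans (MeasureTheory.setLIntegral_mono (by fun_prop) ?_)
      (MeasureTheory.setLIntegral_le_lintegral _ _)
    intro v hv
    apply ENNReal.ofReal_le_ofReal
    apply Real.exp_le_exp.mpr
    have h2 : -8 * v ^ 2 + 12 * u * v - 4 * u ^ 2 = -8 * (v - 3*u/4)^2 + u^2/2 := by ring
    rw [h2]
    have h3 : (v - 3*u/4)^2 ≤ 1 := by
      have := hv.1; have := hv.2
      nlinarith [sq_nonneg (v - 3*u/4)]
    nlinarith [sq_nonneg u]
  have h4 : (∫⁻ u : ℝ, ENNReal.ofReal (Real.exp (-8))) ≤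
      ∫⁻ u : ℝ, ∫⁻ v : ℝ,
        ENNReal.ofReal (Real.exp (-8 * v ^ 2 + 12 * u * v - 4 * u ^ 2)) :=
    MeasureTheory.lintegral_mono fun u => key u
  rw [MeasureTheory.lintegral_const, Real.volume_univ,
    ENNReal.mul_top (by simp [Real.exp_pos])] at h4
  exact top_le_iff.mp h4
end

section
/- Let h(u) = (1/8) u^{−2} e^{−1/(8u)} for u > 0 (a probability density on (0,∞)). Let 0 < α < 3/4 and 0 < γ < 3/64, and let ω(u) = (γ^α/Γ(α)) u^{−α−1} e^{−γ/u} for u > 0 (the inverse-gamma(α, γ) density). Then there exists ξ ∈ (1, 4/3) such that ∫_0^∞ u^{3/2} h(u)³ / ( ( ∫_0^{ξu} v^{1/2} h(v) dv )³ · ω(u)² ) du < ∞. In fact this holds for every ξ with (1 − 16γ/3)^{−1} < ξ < 4/3. -/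
open MeasureTheory Set Real

/-! Write every factor of the integrand as `c * u ^ p * exp (q / u)`; such expressions are closed
under products, powers and quotients. Near `0`, the inner integral over `(0, ξu]` is at least its
part over `[μu, ξu]`, which is of order `u ^ (-1/2) * exp (-1 / (8μu))`. For `μ = (1 - 16γ/3)⁻¹`
the exponentials cancel, leaving an integrand of order `u ^ (2α - 1)`, integrable at `0` since
`α > 0`. For `u > 1` the inner integral is bounded below by a constant, leaving an integrand of
order `u ^ (2α - 5/2)`, integrable at `∞` since `α < 3/4`. -/

noncomputable def powExp (c p q u : ℝ) : ℝ := c * u ^ p * exp (q / u)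

section powExp

variable {c p q c' p' q' u : ℝ}

lemma powExp_zero_right : powExp c p 0 u = c * u ^ p := by simp [powExp]

@[simp] lemma powExp_zero_zero : powExp c 0 0 u = c := by simp [powExp]

lemma powExp_pos (hc : 0 < c) (hu : 0 < u) : 0 < powExp c p q u := by
  unfold powExp; positivity

lemma powExp_nonneg (hc : 0 ≤ c) (hu : 0 ≤ u) : 0 ≤ powExp c p q u := by
  unfold powExp; positivity

lemma powExp_mul (hu : 0 < u) :
    powExp c p q u * powExp c' p' q' u = powExp (c * c') (p + p') (q + q') u := by
  unfold powExp; rw [rpow_add hu, add_div, exp_add]; ring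

lemma powExp_div (hu : 0 < u) :
    powExp c p q u / powExp c' p' q' u = powExp (c / c') (p - p') (q - q') u := by
  unfold powExp; rw [rpow_sub hu, sub_div, exp_sub, mul_div_mul_comm, mul_div_mul_comm]

lemma powExp_pow (hu : 0 < u) (n : ℕ) :
    powExp c p q u ^ n = powExp (c ^ n) (n * p) (n * q) u := by
  unfold powExp
  rw [mul_pow, mul_pow, ← rpow_natCast (u ^ p), ← rpow_mul hu.le, mul_div_assoc, exp_nat_mul,
    mul_comm p]

lemma powExp_le_mul_rpow (hc : 0 ≤ c) (hq : q ≤ 0) (hu : 0 ≤ u) : powExp c p q u ≤ c * u ^ p :=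
  mul_le_of_le_one_right (by positivity) (exp_le_one_iff.2 (div_nonpos_of_nonpos_of_nonneg hq hu))

lemma measurable_powExp : Measurable (powExp c p q) := by
  unfold powExp; fun_prop

lemma exp_div_le_two_mul_sq_div_sq (hq : q < 0) (hu : 0 < u) :
    exp (q / u) ≤ 2 * u ^ 2 / q ^ 2 := by
  have hx : 0 < -q / u := div_pos (neg_pos.2 hq) hu
  have := pow_div_factorial_le_exp (-q / u) hx.le 2
  calc exp (q / u) = (exp (-q / u))⁻¹ := by rw [← exp_neg, neg_div, neg_neg]
    _ ≤ ((-q / u) ^ 2 / (Nat.factorial 2))⁻¹ := inv_anti₀ (by positivity) this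
    _ = 2 * u ^ 2 / q ^ 2 := by field_simp; norm_num

lemma integrableOn_powExp_Ioc (hq : q < 0) (hp : -2 ≤ p) (T : ℝ) :
    IntegrableOn (powExp c p q) (Ioc 0 T) := by
  refine Measure.integrableOn_of_bounded (M := |c| * (2 / q ^ 2) * T ^ (p + 2))
    measure_Ioc_lt_top.ne measurable_powExp.aestronglyMeasurable ?_
  filter_upwards [ae_restrict_mem measurableSet_Ioc] with v ⟨hv, hvT⟩
  calc ‖powExp c p q v‖ = |c| * v ^ p * exp (q / v) := by
        rw [powExp, norm_mul, norm_mul, norm_eq_abs, norm_of_nonneg (by positivity),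
          norm_of_nonneg (exp_pos _).le]
    _ ≤ |c| * v ^ p * (2 * v ^ 2 / q ^ 2) := by
        gcongr; exact exp_div_le_two_mul_sq_div_sq hq hv
    _ = |c| * (2 / q ^ 2) * v ^ (p + 2) := by
        rw [rpow_add hv, rpow_two]; ring
    _ ≤ |c| * (2 / q ^ 2) * T ^ (p + 2) := by
        gcongr; linarith

lemma mul_rpow_mul_exp_le_powExp (hc : 0 ≤ c) (hp : p ≤ 0) (hq : q ≤ 0) {a b v : ℝ} (ha : 0 < a)
    (hv : v ∈ Icc a b) : c * b ^ p * exp (q / a) ≤ powExp c p q v := by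
  have hv0 : 0 < v := ha.trans_le hv.1
  have hpow : b ^ p ≤ v ^ p := rpow_le_rpow_of_nonpos hv0 hv.2 hp
  have hexp : exp (q / a) ≤ exp (q / v) :=
    exp_le_exp.2 ((div_le_div_iff₀ ha hv0).2 (mul_le_mul_of_nonpos_left hv.1 hq))
  unfold powExp
  gcongr

lemma mul_le_setIntegral_Ioc_powExp (hc : 0 ≤ c) (hp₂ : -2 ≤ p) (hp : p ≤ 0) (hq : q < 0)
    {a b T : ℝ} (ha : 0 < a) (hab : a ≤ b) (hbT : b ≤ T) :
    (b - a) * (c * b ^ p * exp (q / a)) ≤ ∫ v in Ioc 0 T, powExp c p q v := by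
  have hint := integrableOn_powExp_Ioc (c := c) hq hp₂ T
  calc (b - a) * (c * b ^ p * exp (q / a))
      = c * b ^ p * exp (q / a) * volume.real (Ioc a b) := by
        rw [Real.volume_real_Ioc_of_le hab, mul_comm]
    _ ≤ ∫ v in Ioc a b, powExp c p q v :=
        setIntegral_ge_of_const_le_real measurableSet_Ioc measure_Ioc_lt_top.ne
          (fun v hv => mul_rpow_mul_exp_le_powExp hc hp hq.le ha (Ioc_subset_Icc_self hv))
          (hint.mono_set (Ioc_subset_Ioc ha.le hbT))
    _ ≤ ∫ v in Ioc 0 T, powExp c p q v := by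
        refine setIntegral_mono_set hint ?_ (Ioc_subset_Ioc ha.le hbT).eventuallyLE
        filter_upwards [ae_restrict_mem measurableSet_Ioc] with v hv
        exact powExp_nonneg hc hv.1.le

lemma powExp_le_setIntegral_Ioc_powExp (hc : 0 ≤ c) (hp₂ : -2 ≤ p) (hp : p ≤ 0) (hq : q < 0)
    {μ ξ : ℝ} (hμ : 0 < μ) (hμξ : μ ≤ ξ) (hu : 0 < u) :
    powExp ((ξ - μ) * c * ξ ^ p) (p + 1) (q / μ) u ≤ ∫ v in Ioc 0 (ξ * u), powExp c p q v := by
  have := mul_le_setIntegral_Ioc_powExp hc hp₂ hp hq (mul_pos hμ hu)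
    (mul_le_mul_of_nonneg_right hμξ hu.le) le_rfl
  convert this using 1
  rw [powExp, mul_rpow (hμ.trans_le hμξ).le hu.le, rpow_add_one hu.ne', div_div]
  ring

end powExp

lemma setLIntegral_Ioi_ofReal_lt_top_of_rpow_bounds {f : ℝ → ℝ} {p r C₀ C₁ : ℝ}
    (hp : -1 < p) (hr : r < -1) (h₀ : ∀ u ∈ Ioc 0 1, f u ≤ C₀ * u ^ p)
    (h₁ : ∀ u ∈ Ioi 1, f u ≤ C₁ * u ^ r) :
    ∫⁻ u in Ioi 0, ENNReal.ofReal (f u) < ⊤ := by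
  have hint₀ : IntegrableOn (fun u : ℝ => C₀ * u ^ p) (Ioc 0 1) := by
    refine Integrable.const_mul ?_ C₀
    rw [← IntegrableOn, integrableOn_Ioc_iff_integrableOn_Ioo]
    exact (intervalIntegral.integrableOn_Ioo_rpow_iff one_pos).2 hp
  have hint₁ : IntegrableOn (fun u : ℝ => C₁ * u ^ r) (Ioi 1) :=
    (integrableOn_Ioi_rpow_of_lt hr one_pos).const_mul C₁
  rw [← Ioc_union_Ioi_eq_Ioi zero_le_one, lintegral_union measurableSet_Ioi Ioc_disjoint_Ioi_same]
  refine ENNReal.add_lt_top.2 ⟨?_, ?_⟩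
  · exact (setLIntegral_mono' measurableSet_Ioc fun u hu => ENNReal.ofReal_le_ofReal
      (h₀ u hu)).trans_lt hint₀.setLIntegral_lt_top
  · exact (setLIntegral_mono' measurableSet_Ioi fun u hu => ENNReal.ofReal_le_ofReal
      (h₁ u hu)).trans_lt hint₁.setLIntegral_lt_top

noncomputable def varianceIntegrand (h ω : ℝ → ℝ) (ξ u : ℝ) : ℝ :=
  u ^ ((3 : ℝ) / 2) * h u ^ 3 /
    ((∫ v in Ioc (0 : ℝ) (ξ * u), v ^ ((1 : ℝ) / 2) * h v) ^ 3 * ω u ^ 2)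

lemma varianceIntegrand_le {h ω : ℝ → ℝ} {ξ u L : ℝ} (hN : 0 ≤ u ^ ((3 : ℝ) / 2) * h u ^ 3)
    (hL : 0 < L) (hLD : L ≤ ∫ v in Ioc (0 : ℝ) (ξ * u), v ^ ((1 : ℝ) / 2) * h v) :
    varianceIntegrand h ω ξ u ≤ u ^ ((3 : ℝ) / 2) * h u ^ 3 / L ^ 3 / ω u ^ 2 := by
  rw [varianceIntegrand, div_mul_eq_div_div]
  gcongr

lemma laplaceDensity_eq_powExp {u : ℝ} (hu : 0 < u) :
    (1 / 8) * (u ^ 2)⁻¹ * exp (-(1 / (8 * u))) = powExp (1 / 8) (-2) (-1 / 8) u := by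
  rw [powExp, rpow_neg hu.le, rpow_two]
  congr 2
  ring

section Laplace

variable {h ω : ℝ → ℝ} {α γ K ξ : ℝ}

lemma setIntegral_rpow_half_mul_eq (hh : EqOn h (powExp (1 / 8) (-2) (-1 / 8)) (Ioi 0))
    (T : ℝ) :
    ∫ v in Ioc 0 T, v ^ ((1 : ℝ) / 2) * h v =
      ∫ v in Ioc 0 T, powExp (1 / 8) (-3 / 2) (-1 / 8) v := by
  refine setIntegral_congr_fun measurableSet_Ioc fun v hv => ?_
  have : v ^ ((1 : ℝ) / 2) = powExp 1 (1 / 2) 0 v := by simp [powExp]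
  rw [hh hv.1, this, powExp_mul hv.1]
  norm_num

lemma rpow_three_halves_mul_pow_three_eq (hh : EqOn h (powExp (1 / 8) (-2) (-1 / 8)) (Ioi 0))
    {u : ℝ} (hu : 0 < u) :
    u ^ ((3 : ℝ) / 2) * h u ^ 3 = powExp (1 / 512) (-9 / 2) (-3 / 8) u := by
  have : u ^ ((3 : ℝ) / 2) = powExp 1 (3 / 2) 0 u := by simp [powExp]
  rw [hh hu, this, powExp_pow hu, powExp_mul hu]
  norm_num

lemma exists_varianceIntegrand_le_rpow_of_pos
    (hh : EqOn h (powExp (1 / 8) (-2) (-1 / 8)) (Ioi 0))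
    (hω : EqOn ω (powExp K (-α - 1) (-γ)) (Ioi 0))
    (hγ : γ < 3 / 16) (hξ : (1 - 16 * γ / 3)⁻¹ < ξ) :
    ∃ C, ∀ u, 0 < u → varianceIntegrand h ω ξ u ≤ C * u ^ (2 * α - 1) := by
  set μ := (1 - 16 * γ / 3)⁻¹ with hμ
  have hμ0 : 0 < μ := inv_pos.2 (by linarith)
  set c := (ξ - μ) * (1 / 8) * ξ ^ (-3 / 2 : ℝ)
  have hc : 0 < c := by have := hμ0.trans hξ; have := sub_pos.2 hξ; positivity
  refine ⟨1 / 512 / c ^ 3 / K ^ 2, fun u hu => ?_⟩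
  have hL := powExp_le_setIntegral_Ioc_powExp (c := 1 / 8) (p := -3 / 2) (q := -1 / 8) (u := u)
    (by norm_num) (by norm_num) (by norm_num) (by norm_num) hμ0 hξ.le hu
  rw [← setIntegral_rpow_half_mul_eq hh] at hL
  refine (varianceIntegrand_le (rpow_three_halves_mul_pow_three_eq hh hu ▸ powExp_nonneg
    (by norm_num) hu.le) (powExp_pos hc hu) hL).trans_eq ?_
  rw [rpow_three_halves_mul_pow_three_eq hh hu, hω hu, powExp_pow hu, powExp_pow hu,
    powExp_div hu, powExp_div hu, ← powExp_zero_right]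
  -- the exponential factors cancel because `3 / (8μ) = 3 / 8 - 2γ`
  congr 1
  · push_cast; ring
  · rw [hμ, div_inv_eq_mul]; push_cast; ring

lemma exists_varianceIntegrand_le_rpow_of_one_lt
    (hh : EqOn h (powExp (1 / 8) (-2) (-1 / 8)) (Ioi 0))
    (hω : EqOn ω (powExp K (-α - 1) (-γ)) (Ioi 0))
    (hγ : γ ≤ 3 / 16) (hξ : 0 < ξ) :
    ∃ C, ∀ u, 1 < u → varianceIntegrand h ω ξ u ≤ C * u ^ (2 * α - 5 / 2) := by
  set L := (ξ - ξ / 2) * (1 / 8 * ξ ^ (-3 / 2 : ℝ) * exp (-1 / 8 / (ξ / 2)))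
  have hL0 : 0 < L := by have : ξ / 2 < ξ := half_lt_self hξ; have := sub_pos.2 this; positivity
  refine ⟨1 / 512 / L ^ 3 / K ^ 2, fun u hu => ?_⟩
  have hu0 : 0 < u := one_pos.trans hu
  have hL := mul_le_setIntegral_Ioc_powExp (c := 1 / 8) (p := -3 / 2) (q := -1 / 8) (by norm_num)
    (by norm_num) (by norm_num) (by norm_num) (half_pos hξ) (half_le_self hξ.le)
    (le_mul_of_one_le_right hξ.le hu.le)
  rw [← setIntegral_rpow_half_mul_eq hh] at hL
  refine (varianceIntegrand_le (rpow_three_halves_mul_pow_three_eq hh hu0 ▸ powExp_nonneg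
    (by norm_num) hu0.le) (powExp_pos hL0 hu0) (by rwa [powExp_zero_zero])).trans ?_
  rw [rpow_three_halves_mul_pow_three_eq hh hu0, hω hu0, powExp_pow hu0, powExp_pow hu0,
    powExp_div hu0, powExp_div hu0]
  refine (powExp_le_mul_rpow (by positivity) (by push_cast; linarith) hu0.le).trans_eq ?_
  congr 2
  push_cast; ring

theorem lintegral_varianceIntegrand_lt_top
    (hh : EqOn h (powExp (1 / 8) (-2) (-1 / 8)) (Ioi 0))
    (hω : EqOn ω (powExp K (-α - 1) (-γ)) (Ioi 0))
    (hα₀ : 0 < α) (hα : α < 3 / 4) (hγ : γ < 3 / 16) (hξ : (1 - 16 * γ / 3)⁻¹ < ξ) :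
    ∫⁻ u in Ioi 0, ENNReal.ofReal (varianceIntegrand h ω ξ u) < ⊤ := by
  have hξ0 : 0 < ξ := (inv_pos.2 (by linarith)).trans hξ
  obtain ⟨C₀, hC₀⟩ := exists_varianceIntegrand_le_rpow_of_pos hh hω hγ hξ
  obtain ⟨C₁, hC₁⟩ := exists_varianceIntegrand_le_rpow_of_one_lt hh hω hγ.le hξ0
  exact setLIntegral_Ioi_ofReal_lt_top_of_rpow_bounds (by linarith) (by linarith)
    (fun u hu => hC₀ u hu.1) (fun u hu => hC₁ u hu)

end Laplace

theorem laplace_mixing_density_finite_variance_condition_general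
    (α γ : ℝ) (hα0 : 0 < α) (hα : α < 3 / 4) (hγ : γ < 3 / 64)
    (h : ℝ → ℝ)
    (hh : ∀ u : ℝ, 0 < u → h u = (1 / 8) * (u ^ 2)⁻¹ * Real.exp (-(1 / (8 * u))))
    (ω : ℝ → ℝ)
    (hω : ∀ u : ℝ, 0 < u →
      ω u = (γ ^ α / Real.Gamma α) * u ^ (-α - 1) * Real.exp (-(γ / u))) :
    (∃ ξ : ℝ, 1 < ξ ∧ ξ < 4 / 3 ∧
      ∫⁻ u in Set.Ioi (0 : ℝ), ENNReal.ofReal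
        (u ^ ((3 : ℝ) / 2) * h u ^ 3 /
          ((∫ v in Set.Ioc (0 : ℝ) (ξ * u), v ^ ((1 : ℝ) / 2) * h v) ^ 3 *
            ω u ^ 2)) < ⊤) ∧
    (∀ ξ : ℝ, (1 - 16 * γ / 3)⁻¹ < ξ → ξ < 4 / 3 →
      ∫⁻ u in Set.Ioi (0 : ℝ), ENNReal.ofReal
        (u ^ ((3 : ℝ) / 2) * h u ^ 3 /
          ((∫ v in Set.Ioc (0 : ℝ) (ξ * u), v ^ ((1 : ℝ) / 2) * h v) ^ 3 *
            ω u ^ 2)) < ⊤) := by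
  have hh' : EqOn h (powExp (1 / 8) (-2) (-1 / 8)) (Ioi 0) := fun u hu =>
    (hh u hu).trans (laplaceDensity_eq_powExp hu)
  have hω' : EqOn ω (powExp (γ ^ α / Gamma α) (-α - 1) (-γ)) (Ioi 0) := fun u hu => by
    rw [hω u hu, powExp, neg_div]
  have hfinite : ∀ ξ, (1 - 16 * γ / 3)⁻¹ < ξ →
      ∫⁻ u in Ioi 0, ENNReal.ofReal (varianceIntegrand h ω ξ u) < ⊤ := fun ξ hξ =>
    lintegral_varianceIntegrand_lt_top hh' hω' hα0 hα (by linarith) hξ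
  have hthreshold : (1 - 16 * γ / 3)⁻¹ < 4 / 3 :=
    (inv_lt_comm₀ (by linarith) (by norm_num)).2 (by linarith)
  obtain ⟨ξ, hξ, hξ43⟩ := exists_between (max_lt (by norm_num : (1 : ℝ) < 4 / 3) hthreshold)
  exact ⟨⟨ξ, (le_max_left _ _).trans_lt hξ, hξ43, hfinite ξ ((le_max_right _ _).trans_lt hξ)⟩,
    fun ξ hξ _ => hfinite ξ hξ⟩

/-- Let `h(u) = (1/8) u⁻² e^{−1/(8u)}` on `(0,∞)` and let `ω` be
the inverse-gamma(α, γ) density with `0 < α < 3/4` and `0 < γ < 3/64`.  Then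
there exists `ξ ∈ (1, 4/3)` such that
`∫_0^∞ u^{3/2} h(u)³ / ((∫_0^{ξu} v^{1/2} h(v) dv)³ ω(u)²) du < ∞`; in fact this
holds for every `ξ` with `(1 − 16γ/3)⁻¹ < ξ < 4/3`. -/
theorem laplace_mixing_density_finite_variance_condition
    (α γ : ℝ) (hα0 : 0 < α) (hα : α < 3 / 4) (hγ0 : 0 < γ) (hγ : γ < 3 / 64)
    (h : ℝ → ℝ)
    (hh : ∀ u : ℝ, 0 < u → h u = (1 / 8) * (u ^ 2)⁻¹ * Real.exp (-(1 / (8 * u))))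
    (ω : ℝ → ℝ)
    (hω : ∀ u : ℝ, 0 < u →
      ω u = (γ ^ α / Real.Gamma α) * u ^ (-α - 1) * Real.exp (-(γ / u))) :
    (∃ ξ : ℝ, 1 < ξ ∧ ξ < 4 / 3 ∧
      ∫⁻ u in Set.Ioi (0 : ℝ), ENNReal.ofReal
        (u ^ ((3 : ℝ) / 2) * h u ^ 3 /
          ((∫ v in Set.Ioc (0 : ℝ) (ξ * u), v ^ ((1 : ℝ) / 2) * h v) ^ 3 *
            ω u ^ 2)) < ⊤) ∧
    (∀ ξ : ℝ, (1 - 16 * γ / 3)⁻¹ < ξ → ξ < 4 / 3 →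
      ∫⁻ u in Set.Ioi (0 : ℝ), ENNReal.ofReal
        (u ^ ((3 : ℝ) / 2) * h u ^ 3 /
          ((∫ v in Set.Ioc (0 : ℝ) (ξ * u), v ^ ((1 : ℝ) / 2) * h v) ^ 3 *
            ω u ^ 2)) < ⊤) :=
  laplace_mixing_density_finite_variance_condition_general α γ hα0 hα hγ h hh ω hω
end
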